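/- For every positive odd integer n there exist sequences of positive integers s_1, q_1, s_2, q_2, … and a sequence of positive odd integers m_1, m_2, … such that n = 2^{s_1} · m_1 − 1 and, setting T_0 = 0 and T_r = Σ_{i=1}^{r} (2·s_i + q_i), for every r ≥ 1 the T_{r-1}-th iterate of the Collatz map applied to n equals 2^{s_r} · m_r − 1, the (T_{r-1} + 2 s_r)-th iterate equals 3^{s_r} · m_r − 1 = 2^{q_r} · (2^{s_{r+1}} · m_{r+1} − 1), and the T_r-th iterate equals 2^{s_{r+1}} · m_{r+1} − 1. Thus the Collatz evolution of any odd number is an alternating sequence of s-evolutions and q-evolutions. -/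
import Mathlib


/-- The Collatz map: `f n = 3 n + 1` if `n` is odd, `n / 2` if `n` is even. -/
def collatz : ℕ → ℕ := fun n => if n % 2 = 1 then 3 * n + 1 else n / 2

lemma collatz_two_step (k m : ℕ) (hm : 0 < m) :
    collatz^[2] (2 ^ (k+1) * m - 1) = 2 ^ k * (3 * m) - 1 := by
  have ha : 0 < 2 ^ k * m := by positivity
  have h1 : 2 ^ (k+1) * m = 2 * (2 ^ k * m) := by ring
  have h2 : 2 ^ k * (3 * m) = 3 * (2 ^ k * m) := by ring
  rw [h1, h2]
  generalize 2 ^ k * m = a at ha ⊢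
  show collatz (collatz (2 * a - 1)) = 3 * a - 1
  have e1 : collatz (2 * a - 1) = 3 * (2 * a - 1) + 1 := by
    unfold collatz; rw [if_pos (by omega)]
  have e2 : 3 * (2 * a - 1) + 1 = 2 * (3 * a - 1) := by omega
  rw [e1, e2]
  unfold collatz
  rw [if_neg (by omega)]
  omega

lemma collatz_s_steps (s m : ℕ) (hm : 0 < m) (hmo : m % 2 = 1) :
    collatz^[2 * s] (2 ^ s * m - 1) = 3 ^ s * m - 1 := by
  induction s generalizing m with
  | zero => simp
  | succ k ih =>
    have h2 : 2 * (k + 1) = 2 * k + 2 := by ring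
    rw [h2, Function.iterate_add_apply, collatz_two_step k m hm,
      ih (3 * m) (by omega) (by omega)]
    ring_nf

lemma collatz_q_steps (q u : ℕ) (hu : u % 2 = 1) :
    collatz^[q] (2 ^ q * u) = u := by
  clear hu
  induction q with
  | zero => simp
  | succ k ih =>
    rw [Function.iterate_succ_apply]
    have h1 : 2 ^ (k+1) * u = 2 * (2 ^ k * u) := by ring
    have h2 : collatz (2 ^ (k+1) * u) = 2 ^ k * u := by
      unfold collatz; rw [h1, if_neg (by omega)]; omega
    rw [h2, ih]

lemma collatz_chain (s m q v : ℕ) (hm : 0 < m) (hmo : m % 2 = 1)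
    (hx : 3 ^ s * m - 1 = 2 ^ q * v) (hv : v % 2 = 1) :
    collatz^[2 * s + q] (2 ^ s * m - 1) = v := by
  rw [add_comm, Function.iterate_add_apply, collatz_s_steps s m hm hmo, hx,
    collatz_q_steps q v hv]

/-- decomposition of a nonzero number into a 2-power times an odd part -/
lemma decomp (x : ℕ) (hx : x ≠ 0) :
    x = 2 ^ (x.factorization 2) * (x / 2 ^ (x.factorization 2)) ∧
      0 < x / 2 ^ (x.factorization 2) ∧ (x / 2 ^ (x.factorization 2)) % 2 = 1 ∧
      (2 ∣ x → 1 ≤ x.factorization 2) := by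
  have h1 := Nat.ordProj_mul_ordCompl_eq_self x 2
  have h2 := Nat.not_dvd_ordCompl Nat.prime_two hx
  refine ⟨h1.symm, ?_, by omega, fun hd => Nat.Prime.factorization_pos_of_dvd Nat.prime_two hx hd⟩
  rcases Nat.eq_zero_or_pos (x / 2 ^ (x.factorization 2)) with h | h
  · omega
  · exact h

def sF (u : ℕ) : ℕ := (u + 1).factorization 2
def mF (u : ℕ) : ℕ := (u + 1) / 2 ^ sF u
def xF (u : ℕ) : ℕ := 3 ^ sF u * mF u - 1
def qF (u : ℕ) : ℕ := (xF u).factorization 2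
def nF (u : ℕ) : ℕ := xF u / 2 ^ qF u

lemma bundle (u : ℕ) (hu : 0 < u) (huo : u % 2 = 1) :
    1 ≤ sF u ∧ 0 < mF u ∧ mF u % 2 = 1 ∧ u = 2 ^ sF u * mF u - 1 ∧
    1 ≤ qF u ∧ 0 < nF u ∧ nF u % 2 = 1 ∧
    3 ^ sF u * mF u - 1 = 2 ^ qF u * nF u ∧
    collatz^[2 * sF u + qF u] u = nF u := by
  obtain ⟨d1, d2, d3, d4⟩ := decomp (u + 1) (by omega)
  have hs : 1 ≤ sF u := d4 ⟨(u+1)/2, by omega⟩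
  have hmpos : 0 < mF u := d2
  have hmo : mF u % 2 = 1 := d3
  have hmul : 2 ^ sF u * mF u = u + 1 := d1.symm
  have hrep : u = 2 ^ sF u * mF u - 1 := by omega
  have hxpos : 2 ≤ 3 ^ sF u * mF u := by
    calc 2 ≤ 3 ^ 1 * 1 := by norm_num
    _ ≤ 3 ^ sF u * mF u := Nat.mul_le_mul (Nat.pow_le_pow_right (by norm_num) hs) hmpos
  have hxodd : (3 ^ sF u * mF u) % 2 = 1 := by
    have h3 : (3 : ℕ) ^ sF u % 2 = 1 := Nat.pow_mod 3 (sF u) 2 ▸ by simp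
    have hmm := Nat.mul_mod (3 ^ sF u) (mF u) 2
    rw [h3, hmo] at hmm
    omega
  have hxne : xF u ≠ 0 := by unfold xF; omega
  obtain ⟨e1, e2, e3, e4⟩ := decomp (xF u) hxne
  have hq : 1 ≤ qF u := e4 (by unfold xF; omega)
  have hx : 3 ^ sF u * mF u - 1 = 2 ^ qF u * nF u := e1
  have hc := collatz_chain (sF u) (mF u) (qF u) (nF u) hmpos hmo hx e3
  rw [← hrep] at hc
  exact ⟨hs, hmpos, hmo, hrep, hq, e2, e3, hx, hc⟩


/-- The Collatz evolution of any positive odd number `n` is an alternating sequence of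
`s`-evolutions and `q`-evolutions: there are sequences of positive integers
`s 0, q 0, s 1, q 1, …` and positive odd integers `m 0, m 1, …` (indexed from `0`
instead of `1`) such that `n = 2 ^ s 0 * m 0 - 1` and, with
`T r = ∑_{i < r} (2 * s i + q i)`, for every `r` the `T r`-th iterate of the Collatz
map at `n` equals `2 ^ s r * m r - 1`, the `(T r + 2 * s r)`-th iterate equals
`3 ^ s r * m r - 1 = 2 ^ q r * (2 ^ s (r+1) * m (r+1) - 1)`, and the `T (r+1)`-th
iterate equals `2 ^ s (r+1) * m (r+1) - 1`. -/
theorem collatz_evolution_pattern (n : ℕ) (hn : 0 < n) (hodd : ¬ 2 ∣ n) :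
    ∃ s q m : ℕ → ℕ,
      (∀ i, 1 ≤ s i) ∧ (∀ i, 1 ≤ q i) ∧ (∀ i, 0 < m i ∧ ¬ 2 ∣ m i) ∧
      n = 2 ^ s 0 * m 0 - 1 ∧
      ∀ r : ℕ,
        collatz^[∑ i ∈ Finset.range r, (2 * s i + q i)] n = 2 ^ s r * m r - 1 ∧
        collatz^[(∑ i ∈ Finset.range r, (2 * s i + q i)) + 2 * s r] n
          = 3 ^ s r * m r - 1 ∧
        3 ^ s r * m r - 1 = 2 ^ q r * (2 ^ s (r + 1) * m (r + 1) - 1) ∧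
        collatz^[∑ i ∈ Finset.range (r + 1), (2 * s i + q i)] n
          = 2 ^ s (r + 1) * m (r + 1) - 1 := by
  have hno : n % 2 = 1 := by omega
  set a : ℕ → ℕ := fun r => nF^[r] n with ha
  have hstep : ∀ r, a (r + 1) = nF (a r) := fun r => Function.iterate_succ_apply' nF r n
  have ha0 : a 0 = n := rfl
  set s : ℕ → ℕ := fun r => sF (a r) with hsdef
  set q : ℕ → ℕ := fun r => qF (a r) with hqdef
  set m : ℕ → ℕ := fun r => mF (a r) with hmdef
  have hs : ∀ r, s r = sF (a r) := fun _ => rfl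
  have hq : ∀ r, q r = qF (a r) := fun _ => rfl
  have hm : ∀ r, m r = mF (a r) := fun _ => rfl
  have inv : ∀ r, (0 < a r ∧ a r % 2 = 1) ∧
      collatz^[∑ i ∈ Finset.range r, (2 * s i + q i)] n = a r := by
    intro r
    induction r with
    | zero => exact ⟨⟨by rw [ha0]; exact hn, by rw [ha0]; exact hno⟩, by simp [ha0]⟩
    | succ k ih =>
      obtain ⟨⟨hp, ho⟩, hit⟩ := ih
      obtain ⟨_, _, _, _, _, hnp, hno', _, hcol⟩ := bundle (a k) hp ho
      refine ⟨⟨by rw [hstep]; exact hnp, by rw [hstep]; exact hno'⟩, ?_⟩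
      rw [Finset.sum_range_succ, add_comm, Function.iterate_add_apply, hit,
        hstep, hs, hq]
      exact hcol
  refine ⟨s, q, m, fun i => by rw [hs]; exact (bundle (a i) (inv i).1.1 (inv i).1.2).1,
    fun i => by rw [hq]; exact (bundle (a i) (inv i).1.1 (inv i).1.2).2.2.2.2.1,
    fun i => ⟨by rw [hm]; exact (bundle (a i) (inv i).1.1 (inv i).1.2).2.1, by
      rw [hm]
      have := (bundle (a i) (inv i).1.1 (inv i).1.2).2.2.1; omega⟩,
    by rw [hs, hm, ← ha0]; exact (bundle (a 0) (inv 0).1.1 (inv 0).1.2).2.2.2.1, ?_⟩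
  intro r
  obtain ⟨hs1, hmp, hmo, hrep, hq1, hnp, hno', hxeq, hcol⟩ :=
    bundle (a r) (inv r).1.1 (inv r).1.2
  obtain ⟨hs', hmp', hmo', hrep', _⟩ := bundle (a (r+1)) (inv (r+1)).1.1 (inv (r+1)).1.2
  refine ⟨by rw [(inv r).2, hs, hm]; exact hrep, ?_, ?_,
    by rw [(inv (r+1)).2, hs, hm]; exact hrep'⟩
  · rw [Nat.add_comm (∑ i ∈ Finset.range r, (2 * s i + q i)) (2 * s r),
      Function.iterate_add_apply, (inv r).2, hs, hm]
    set S := sF (a r) with hS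
    set M := mF (a r) with hM
    rw [hrep]
    exact collatz_s_steps S M hmp hmo
  · rw [hs, hm, hq, hxeq, ← hstep r, hs, hm, ← hrep']
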